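/- Let f : ℝ^d → ℝ be L-smooth (L > 0) and bounded below by f* ∈ ℝ, let x⁰ ∈ ℝ^d, and set Δ = f(x⁰) − f*. Let σ² > 0 and ε > 0. Let G be a stochastic gradient oracle for f with variance σ² on a probability space (Ω, P), let S = max{⌈σ²/ε⌉, 1}, and let {ξ^{k,i}}_{k ≥ 0, 1 ≤ i ≤ S} be an i.i.d. family of Ω-valued random elements. Define the minibatch iterates of Rennala SGD by x^{k+1} = x^k − γ·(1/S)·∑_{i=1}^S G(x^k, ξ^{k,i}) with stepsize γ = min{1/L, εS/(2Lσ²)}. Then for every natural number K ≥ 24ΔL/ε, we have (1/K)·∑_{k=0}^{K−1} E[‖∇f(x^k)‖²] ≤ ε. -/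

import Mathlib

/-!
For an `L`-smooth `f`, `f (x - γ g) ≤ f x - γ ⟪∇f x, g⟫ + L γ² ‖g‖² / 2`. The minibatch of
step `k` is independent of `x^k`, so given `x^k = y` the step direction `g` is the mean of `S`
i.i.d. unbiased samples of `∇f y`: `E g = ∇f y` and `E ‖g‖² ≤ ‖∇f y‖² + σ² / S`. With `L γ ≤ 1`
this gives `E f(x^{k+1}) ≤ E f(x^k) - (γ/2) E ‖∇f(x^k)‖² + L γ² σ² / (2S)`, and telescoping bounds
the average of `E ‖∇f(x^k)‖²` over `k < K` by `2Δ / (γK) + L γ σ² / S`. The choice of `S` and `γ`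
makes the second term at most `ε/2` and, once `K ≥ 24ΔL/ε`, the first at most `ε/6`.

The expectations of `f(x^k) - f*` and of `‖∇f(x^k)‖²` are taken as lower Lebesgue integrals of
nonnegative functions, so no integrability of the iterates is needed.
-/

open MeasureTheory ProbabilityTheory Finset
open scoped RealInnerProductSpace

section Smooth

variable {E : Type*} [NormedAddCommGroup E] [InnerProductSpace ℝ E] [CompleteSpace E]
  {f : E → ℝ} {L : ℝ}

theorem le_add_inner_gradient_add_sq_of_lipschitz_gradient (hf : Differentiable ℝ f)
    (hL : ∀ x y, ‖gradient f x - gradient f y‖ ≤ L * ‖x - y‖) (x y : E) :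
    f y ≤ f x + ⟪gradient f x, y - x⟫ + L / 2 * ‖y - x‖ ^ 2 := by
  set v := y - x
  let φ : ℝ → ℝ := fun t => f (x + t • v) - t * ⟪gradient f x, v⟫ - L / 2 * t ^ 2 * ‖v‖ ^ 2
  have hφ : ∀ t, HasDerivAt φ
      (⟪gradient f (x + t • v), v⟫ - ⟪gradient f x, v⟫ - L * t * ‖v‖ ^ 2) t := by
    intro t
    have hline : HasDerivAt (fun s : ℝ => x + s • v) v t := by
      simpa using ((hasDerivAt_id t).smul_const v).const_add x
    have hcomp := (hf (x + t • v)).hasGradientAt.hasFDerivAt.comp_hasDerivAt t hline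
    rw [InnerProductSpace.toDual_apply_apply] at hcomp
    refine ((hcomp.sub ((hasDerivAt_id t).mul_const ⟪gradient f x, v⟫)).sub
      (((hasDerivAt_pow 2 t).const_mul (L / 2)).mul_const (‖v‖ ^ 2))).congr_deriv ?_
    push_cast; ring
  have hanti : AntitoneOn φ (Set.Ici 0) := by
    refine antitoneOn_of_deriv_nonpos (convex_Ici 0)
      (fun t _ => (hφ t).continuousAt.continuousWithinAt)
      (fun t _ => (hφ t).differentiableAt.differentiableWithinAt) fun t ht => ?_
    rw [interior_Ici, Set.mem_Ioi] at ht
    rw [(hφ t).deriv, sub_nonpos, sub_le_iff_le_add', ← sub_le_iff_le_add', ← inner_sub_left]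
    calc ⟪gradient f (x + t • v) - gradient f x, v⟫
        ≤ ‖gradient f (x + t • v) - gradient f x‖ * ‖v‖ := real_inner_le_norm _ _
      _ ≤ L * ‖t • v‖ * ‖v‖ := by
          gcongr
          simpa using hL (x + t • v) x
      _ = L * t * ‖v‖ ^ 2 := by rw [norm_smul, Real.norm_of_nonneg ht.le]; ring
  have h : φ 1 ≤ φ 0 := hanti Set.self_mem_Ici (Set.mem_Ici.2 zero_le_one) zero_le_one
  simp only [φ, v, one_smul, zero_smul, add_zero, add_sub_cancel] at h
  linarith

theorem apply_sub_smul_le_of_lipschitz_gradient (hf : Differentiable ℝ f)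
    (hL : ∀ x y, ‖gradient f x - gradient f y‖ ≤ L * ‖x - y‖) (x v : E) (t : ℝ) :
    f (x - t • v) ≤ f x - t * ⟪gradient f x, v⟫ + L / 2 * t ^ 2 * ‖v‖ ^ 2 := by
  have h := le_add_inner_gradient_add_sq_of_lipschitz_gradient hf hL x (x - t • v)
  rw [sub_sub_cancel_left, inner_neg_right, real_inner_smul_right, norm_neg, norm_smul,
    Real.norm_eq_abs, mul_pow, sq_abs] at h
  linarith

theorem continuous_gradient_of_lipschitz_gradient
    (hL : ∀ x y, ‖gradient f x - gradient f y‖ ≤ L * ‖x - y‖) : Continuous (gradient f) :=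
  (LipschitzWith.of_dist_le' fun x y => by simpa only [dist_eq_norm] using hL x y).continuous

variable {α : Type*} [MeasurableSpace α] {μ : Measure α} [IsProbabilityMeasure μ] {fstar : ℝ}
  {Y : α → E}

theorem integrable_comp_sub_smul (hf : Differentiable ℝ f)
    (hL : ∀ x y, ‖gradient f x - gradient f y‖ ≤ L * ‖x - y‖) (hlb : ∀ x, fstar ≤ f x)
    (hY : MemLp Y 2 μ) (x : E) (t : ℝ) : Integrable (fun a => f (x - t • Y a)) μ :=
  integrable_of_le_of_le
    (hf.continuous.comp_aestronglyMeasurable (aestronglyMeasurable_const.sub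
      (hY.aestronglyMeasurable.const_smul t)))
    (ae_of_all _ fun _ => hlb _)
    (ae_of_all _ fun a => apply_sub_smul_le_of_lipschitz_gradient hf hL x (Y a) t)
    (integrable_const _)
    (((integrable_const _).sub (((hY.integrable one_le_two).const_inner _).const_mul t)).add
      ((hY.integrable_norm_pow two_ne_zero).const_mul _))

theorem integral_comp_sub_smul_le (hf : Differentiable ℝ f)
    (hL : ∀ x y, ‖gradient f x - gradient f y‖ ≤ L * ‖x - y‖) (hlb : ∀ x, fstar ≤ f x)
    (hY : MemLp Y 2 μ) (x : E) (t : ℝ) :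
    ∫ a, f (x - t • Y a) ∂μ ≤
      f x - t * ⟪gradient f x, ∫ a, Y a ∂μ⟫ + L / 2 * t ^ 2 * ∫ a, ‖Y a‖ ^ 2 ∂μ := by
  have hinner := ((hY.integrable one_le_two).const_inner (gradient f x)).const_mul t
  have hlin : Integrable (fun a => f x - t * ⟪gradient f x, Y a⟫) μ :=
    (integrable_const _).sub hinner
  have hsq := (hY.integrable_norm_pow two_ne_zero).const_mul (L / 2 * t ^ 2)
  calc ∫ a, f (x - t • Y a) ∂μ
      ≤ ∫ a, (f x - t * ⟪gradient f x, Y a⟫ + L / 2 * t ^ 2 * ‖Y a‖ ^ 2) ∂μ :=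
        integral_mono (integrable_comp_sub_smul hf hL hlb hY x t) (hlin.add hsq)
          fun a => apply_sub_smul_le_of_lipschitz_gradient hf hL x (Y a) t
    _ = _ := by
        rw [integral_add hlin hsq, integral_sub (integrable_const _) hinner, integral_const_mul,
          integral_const_mul, integral_inner (hY.integrable one_le_two)]
        simp

end Smooth

section Moments

variable {Ω : Type*} [MeasurableSpace Ω] {μ : Measure Ω} [IsProbabilityMeasure μ]

theorem memLp_two_of_integrable_norm_sub_sq {F : Type*} [NormedAddCommGroup F] {g : Ω → F}
    (hg : AEStronglyMeasurable g μ) (c : F) (h : Integrable (fun ω => ‖g ω - c‖ ^ 2) μ) :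
    MemLp g 2 μ :=
  (((memLp_two_iff_integrable_sq_norm (hg.sub aestronglyMeasurable_const)).2 h).add
    (memLp_const c)).ae_eq (ae_of_all _ fun _ => sub_add_cancel _ _)

variable {E : Type*} [NormedAddCommGroup E] [InnerProductSpace ℝ E] [CompleteSpace E]

theorem integral_norm_add_sq_of_integral_eq_zero {D : Ω → E} (hD : MemLp D 2 μ)
    (hD0 : ∫ ω, D ω ∂μ = 0) (m : E) :
    ∫ ω, ‖m + D ω‖ ^ 2 ∂μ = ‖m‖ ^ 2 + ∫ ω, ‖D ω‖ ^ 2 ∂μ := by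
  have hD2 := hD.integrable_norm_pow two_ne_zero
  have hinner := (hD.integrable one_le_two).const_inner (𝕜 := ℝ) m
  simp_rw [norm_add_sq_real]
  rw [integral_add (by fun_prop) hD2, integral_add (integrable_const _) (hinner.const_mul 2),
    integral_const_mul, integral_inner (hD.integrable one_le_two), hD0]
  simp

variable [MeasurableSpace E] [BorelSpace E]

theorem integral_norm_sum_sq_of_iIndepFun {ι : Type*} {Z : ι → Ω → E} (hind : iIndepFun Z μ)
    (hZ : ∀ i, MemLp (Z i) 2 μ) (hZ0 : ∀ i, ∫ ω, Z i ω ∂μ = 0) (s : Finset ι) :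
    ∫ ω, ‖∑ i ∈ s, Z i ω‖ ^ 2 ∂μ = ∑ i ∈ s, ∫ ω, ‖Z i ω‖ ^ 2 ∂μ := by
  have hint : ∀ i j, Integrable (fun ω => ⟪Z i ω, Z j ω⟫) μ := by
    intro i j
    rcases eq_or_ne i j with rfl | hij
    · simpa only [real_inner_self_eq_norm_sq] using (hZ i).integrable_norm_pow two_ne_zero
    · exact (hind.indepFun hij).integrable_bilin ((hZ i).integrable one_le_two)
        ((hZ j).integrable one_le_two) (innerSL ℝ)
  have hcross : ∀ i j, i ≠ j → ∫ ω, ⟪Z i ω, Z j ω⟫ ∂μ = 0 := fun i j hij =>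
    ((hind.indepFun hij).integral_bilin ((hZ i).integrable one_le_two)
      ((hZ j).integrable one_le_two) (innerSL ℝ)).trans (by simp [hZ0])
  calc ∫ ω, ‖∑ i ∈ s, Z i ω‖ ^ 2 ∂μ = ∫ ω, ∑ i ∈ s, ∑ j ∈ s, ⟪Z i ω, Z j ω⟫ ∂μ := by
        simp_rw [← real_inner_self_eq_norm_sq, sum_inner, inner_sum]
    _ = ∑ i ∈ s, ∑ j ∈ s, ∫ ω, ⟪Z i ω, Z j ω⟫ ∂μ := by
        rw [integral_finsetSum _ fun i _ => integrable_finsetSum _ fun j _ => hint i j]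
        exact sum_congr rfl fun i _ => integral_finsetSum _ fun j _ => hint i j
    _ = ∑ i ∈ s, ∫ ω, ‖Z i ω‖ ^ 2 ∂μ := by
        refine sum_congr rfl fun i hi => ?_
        rw [sum_eq_single_of_mem i hi fun j _ hji => hcross i j hji.symm]
        simp_rw [real_inner_self_eq_norm_sq]

theorem integral_norm_sum_sq_pi {ι : Type*} [Fintype ι] {Z : Ω → E} (hZ : MemLp Z 2 μ)
    (hZ0 : ∫ ω, Z ω ∂μ = 0) :
    ∫ v, ‖∑ i, Z (v i)‖ ^ 2 ∂(Measure.pi fun _ : ι => μ) =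
      Fintype.card ι * ∫ ω, ‖Z ω‖ ^ 2 ∂μ := by
  rw [integral_norm_sum_sq_of_iIndepFun
      (iIndepFun_pi fun _ => hZ.aestronglyMeasurable.aemeasurable)
      (fun i => hZ.comp_measurePreserving (measurePreserving_eval _ i))
      (fun i => (integral_comp_eval hZ.aestronglyMeasurable).trans hZ0),
    sum_congr rfl fun i _ => integral_comp_eval (μ := fun _ : ι => μ) (i := i)
      (hZ.integrable_norm_pow two_ne_zero).aestronglyMeasurable]
  simp

end Moments

section Minibatch

variable {Ω ι : Type*} [MeasurableSpace Ω] {P : Measure Ω} [IsProbabilityMeasure P] [Fintype ι]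

theorem memLp_minibatch {E : Type*} [NormedAddCommGroup E] [NormedSpace ℝ E] {g : Ω → E}
    (hg : MemLp g 2 P) :
    MemLp (fun v : ι → Ω => (1 / (Fintype.card ι : ℝ)) • ∑ i, g (v i)) 2
      (Measure.pi fun _ => P) :=
  (memLp_finsetSum _ fun i _ => hg.comp_measurePreserving (measurePreserving_eval _ i)).const_smul _

theorem integral_minibatch {E : Type*} [NormedAddCommGroup E] [NormedSpace ℝ E] {g : Ω → E}
    [Nonempty ι] (hg : Integrable g P) :
    ∫ v : ι → Ω, (1 / (Fintype.card ι : ℝ)) • ∑ i, g (v i) ∂(Measure.pi fun _ => P) =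
      ∫ ω, g ω ∂P := by
  rw [integral_smul, integral_finsetSum (f := fun i (v : ι → Ω) => g (v i)) _ fun i _ =>
      integrable_comp_eval hg]
  simp_rw [integral_comp_eval (μ := fun _ : ι => P) hg.aestronglyMeasurable]
  rw [sum_const, card_univ, ← Nat.cast_smul_eq_nsmul ℝ, smul_smul,
    one_div_mul_cancel (by positivity), one_smul]

theorem integral_norm_sq_minibatch {E : Type*} [NormedAddCommGroup E] [InnerProductSpace ℝ E]
    [CompleteSpace E] [MeasurableSpace E] [BorelSpace E] {g : Ω → E} [Nonempty ι]
    (hg : MemLp g 2 P) :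
    ∫ v : ι → Ω, ‖(1 / (Fintype.card ι : ℝ)) • ∑ i, g (v i)‖ ^ 2 ∂(Measure.pi fun _ => P) =
      ‖∫ ω, g ω ∂P‖ ^ 2 + (∫ ω, ‖g ω - ∫ ω, g ω ∂P‖ ^ 2 ∂P) / Fintype.card ι := by
  set m := ∫ ω, g ω ∂P
  have hZ : MemLp (fun ω => g ω - m) 2 P := hg.sub (memLp_const m)
  have hZ0 : ∫ ω, (g ω - m) ∂P = 0 := by
    rw [integral_sub (hg.integrable one_le_two) (integrable_const m)]; simp [m]
  have hcard : (0 : ℝ) < Fintype.card ι := by exact_mod_cast Fintype.card_pos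
  have hsplit : ∀ v : ι → Ω, (1 / (Fintype.card ι : ℝ)) • ∑ i, g (v i) =
      m + (1 / (Fintype.card ι : ℝ)) • ∑ i, (g (v i) - m) := fun v => by
    rw [sum_sub_distrib, sum_const, card_univ, smul_sub, ← Nat.cast_smul_eq_nsmul ℝ, smul_smul,
      one_div_mul_cancel hcard.ne', one_smul, add_sub_cancel]
  have hD0 := integral_minibatch (ι := ι) (hZ.integrable one_le_two)
  rw [hZ0] at hD0
  simp_rw [hsplit]
  rw [integral_norm_add_sq_of_integral_eq_zero (memLp_minibatch hZ) hD0]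
  simp only [norm_smul, mul_pow, integral_const_mul]
  rw [integral_norm_sum_sq_pi hZ hZ0, Real.norm_of_nonneg (by positivity)]
  field_simp

end Minibatch

noncomputable def minibatchStep {E Ω : Type*} [AddCommGroup E] [Module ℝ E] (G : E → Ω → E)
    (γ : ℝ) {S : ℕ} (x : E) (v : Fin S → Ω) : E :=
  x - (γ * (1 / (S : ℝ))) • ∑ i, G x (v i)

theorem measurable_minibatchStep {E Ω : Type*} [NormedAddCommGroup E] [NormedSpace ℝ E]
    [MeasurableSpace E] [BorelSpace E] [SecondCountableTopology E] [MeasurableSpace Ω]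
    {G : E → Ω → E} (hG : Measurable fun q : E × Ω => G q.1 q.2) (γ : ℝ) (S : ℕ) :
    Measurable (Function.uncurry (minibatchStep G γ (S := S))) :=
  measurable_fst.sub ((Finset.measurable_sum _ fun i _ =>
    hG.comp (measurable_fst.prodMk ((measurable_pi_apply i).comp measurable_snd))).const_smul _)

section OneStep

variable {E Ω : Type*} [NormedAddCommGroup E] [InnerProductSpace ℝ E] [CompleteSpace E]
  [MeasurableSpace Ω] {P : Measure Ω} [IsProbabilityMeasure P]
  {f : E → ℝ} {L fstar σ2 γ : ℝ} {G : E → Ω → E} {S : ℕ} {x : E}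

theorem integrable_minibatchStep (hf : Differentiable ℝ f)
    (hL : ∀ x y, ‖gradient f x - gradient f y‖ ≤ L * ‖x - y‖) (hlb : ∀ x, fstar ≤ f x)
    (hG : MemLp (G x) 2 P) (γ : ℝ) (S : ℕ) :
    Integrable (fun v => f (minibatchStep G γ x v)) (Measure.pi fun _ : Fin S => P) := by
  have hY := memLp_minibatch (ι := Fin S) hG
  rw [Fintype.card_fin] at hY
  simpa only [minibatchStep, mul_smul] using integrable_comp_sub_smul hf hL hlb hY x γ

variable [MeasurableSpace E] [BorelSpace E]

theorem integral_minibatchStep_le (hf : Differentiable ℝ f) (hL₀ : 0 ≤ L)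
    (hL : ∀ x y, ‖gradient f x - gradient f y‖ ≤ L * ‖x - y‖) (hlb : ∀ x, fstar ≤ f x)
    (hG : MemLp (G x) 2 P) (hGunbiased : ∫ ω, G x ω ∂P = gradient f x)
    (hGvar : ∫ ω, ‖G x ω - gradient f x‖ ^ 2 ∂P ≤ σ2) (hγ : 0 ≤ γ) (hLγ : L * γ ≤ 1)
    (hS : 0 < S) :
    ∫ v, f (minibatchStep G γ x v) ∂(Measure.pi fun _ : Fin S => P) ≤
      f x - γ / 2 * ‖gradient f x‖ ^ 2 + L * γ ^ 2 * σ2 / (2 * S) := by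
  have : Nonempty (Fin S) := ⟨⟨0, hS⟩⟩
  set m := gradient f x
  set Y : (Fin S → Ω) → E := fun v => (1 / (S : ℝ)) • ∑ i, G x (v i)
  have hY : MemLp Y 2 (Measure.pi fun _ => P) := by
    have := memLp_minibatch (ι := Fin S) hG
    rwa [Fintype.card_fin] at this
  have hYmean : ∫ v, Y v ∂(Measure.pi fun _ => P) = m := by
    have := integral_minibatch (ι := Fin S) (hG.integrable one_le_two)
    rwa [Fintype.card_fin, hGunbiased] at this
  have hYsq : ∫ v, ‖Y v‖ ^ 2 ∂(Measure.pi fun _ => P) ≤ ‖m‖ ^ 2 + σ2 / S := by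
    have := integral_norm_sq_minibatch (ι := Fin S) hG
    rw [Fintype.card_fin, hGunbiased] at this
    rw [this]
    gcongr
  have hdescent := integral_comp_sub_smul_le hf hL hlb hY x γ
  rw [hYmean, real_inner_self_eq_norm_sq] at hdescent
  have hnoise : L / 2 * γ ^ 2 * ∫ v, ‖Y v‖ ^ 2 ∂(Measure.pi fun _ => P) ≤
      L / 2 * γ ^ 2 * ‖m‖ ^ 2 + L * γ ^ 2 * σ2 / (2 * S) := by
    calc _ ≤ L / 2 * γ ^ 2 * (‖m‖ ^ 2 + σ2 / S) := by gcongr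
      _ = _ := by ring
  have hbias : L / 2 * γ ^ 2 * ‖m‖ ^ 2 ≤ γ / 2 * ‖m‖ ^ 2 := by
    have : L * γ ^ 2 ≤ γ := by nlinarith
    nlinarith [sq_nonneg ‖m‖]
  simp only [minibatchStep, mul_smul]
  linarith

theorem lintegral_minibatchStep_add_le (hf : Differentiable ℝ f) (hL₀ : 0 ≤ L)
    (hL : ∀ x y, ‖gradient f x - gradient f y‖ ≤ L * ‖x - y‖) (hlb : ∀ x, fstar ≤ f x)
    (hG : MemLp (G x) 2 P) (hGunbiased : ∫ ω, G x ω ∂P = gradient f x)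
    (hGvar : ∫ ω, ‖G x ω - gradient f x‖ ^ 2 ∂P ≤ σ2) (hγ : 0 ≤ γ) (hLγ : L * γ ≤ 1)
    (hS : 0 < S) :
    ∫⁻ v, ENNReal.ofReal (f (minibatchStep G γ x v) - fstar) ∂(Measure.pi fun _ : Fin S => P) +
        ENNReal.ofReal (γ / 2 * ‖gradient f x‖ ^ 2) ≤
      ENNReal.ofReal (f x - fstar) + ENNReal.ofReal (L * γ ^ 2 * σ2 / (2 * S)) := by
  have hσ2 : 0 ≤ σ2 := (integral_nonneg fun _ => sq_nonneg _).trans hGvar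
  have hint := integrable_minibatchStep hf hL hlb hG γ S
  rw [← ofReal_integral_eq_lintegral_ofReal (f := fun v => f (minibatchStep G γ x v) - fstar)
      (hint.sub (integrable_const _)) (ae_of_all _ fun v => sub_nonneg.2 (hlb _)),
    ← ENNReal.ofReal_add (integral_nonneg fun v => sub_nonneg.2 (hlb _)) (by positivity),
    ← ENNReal.ofReal_add (sub_nonneg.2 (hlb x)) (by positivity)]
  refine ENNReal.ofReal_le_ofReal ?_
  rw [integral_sub hint (integrable_const _), integral_const, probReal_univ, one_smul]
  linarith [integral_minibatchStep_le hf hL₀ hL hlb hG hGunbiased hGvar hγ hLγ hS]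

end OneStep

theorem indepFun_of_measurable_biSup {κ Ω' Ω β δ : Type*} [MeasurableSpace Ω']
    [mΩ : MeasurableSpace Ω] [MeasurableSpace β] [MeasurableSpace δ] {Q : Measure Ω'}
    {ξ : κ → Ω' → Ω}
    (hξ : ∀ q, Measurable (ξ q)) (hind : iIndepFun ξ Q) {A B : Set κ} (hAB : Disjoint A B)
    {X : Ω' → β} {Y : Ω' → δ} (hX : Measurable[⨆ q ∈ A, mΩ.comap (ξ q)] X)
    (hY : Measurable[⨆ q ∈ B, mΩ.comap (ξ q)] Y) : IndepFun X Y Q :=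
  indep_of_indep_of_le_left
    (indep_of_indep_of_le_right (indep_iSup_of_disjoint (fun q => (hξ q).comap_le) hind hAB)
      hY.comap_le) hX.comap_le

theorem measurable_biSup_comap_pi {κ ι Ω' Ω : Type*} [mΩ : MeasurableSpace Ω] {ξ : κ → Ω' → Ω}
    {A : Set κ} {g : ι → κ} (hg : ∀ i, g i ∈ A) :
    Measurable[⨆ q ∈ A, mΩ.comap (ξ q)] (fun ω i => ξ (g i) ω) := by
  -- the σ-algebra on `Ω'` is not an instance here; make the one in the goal available
  let := ⨆ q ∈ A, mΩ.comap (ξ q)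
  exact measurable_pi_lambda _ fun i => measurable_iff_comap_le.2 <|
    le_iSup₂ (f := fun q (_ : q ∈ A) => mΩ.comap (ξ q)) (g i) (hg i)

section Iteration

variable {ι Ω' Ω E : Type*} [mΩ : MeasurableSpace Ω] [MeasurableSpace E]
  {ξ : ℕ × ι → Ω' → Ω} {T : E → (ι → Ω) → E} {x : ℕ → Ω' → E} {x₀ : E}

theorem measurable_iterate_past (hT : Measurable (Function.uncurry T))
    (hx0 : ∀ ω, x 0 ω = x₀) (hx : ∀ k ω, x (k + 1) ω = T (x k ω) (fun i => ξ (k, i) ω)) (k : ℕ) :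
    Measurable[⨆ q ∈ {q : ℕ × ι | q.1 < k}, mΩ.comap (ξ q)] (x k) := by
  induction k with
  | zero => simp [funext hx0]
  | succ k ih =>
    have hxk := ih.mono (biSup_mono fun q (hq : q.1 < k) => Nat.lt_succ_of_lt hq) le_rfl
    have hblock := measurable_biSup_comap_pi (ξ := ξ) (A := {q : ℕ × ι | q.1 < k + 1})
      (g := fun i => (k, i)) fun i => Nat.lt_succ_self k
    rw [funext (hx k)]
    exact hT.comp (hxk.prodMk hblock)

variable [MeasurableSpace Ω']

theorem measurable_iterate (hξ : ∀ q, Measurable (ξ q)) (hT : Measurable (Function.uncurry T))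
    (hx0 : ∀ ω, x 0 ω = x₀) (hx : ∀ k ω, x (k + 1) ω = T (x k ω) (fun i => ξ (k, i) ω)) (k : ℕ) :
    Measurable (x k) :=
  (measurable_iterate_past hT hx0 hx k).mono (iSup₂_le fun q _ => (hξ q).comap_le) le_rfl

variable {Q : Measure Ω'} [IsProbabilityMeasure Q] [Fintype ι] {P : Measure Ω}

theorem map_iterate_block_eq_prod (hξ : ∀ q, Measurable (ξ q)) (hind : iIndepFun ξ Q)
    (hdist : ∀ q, Q.map (ξ q) = P) (hT : Measurable (Function.uncurry T))
    (hx0 : ∀ ω, x 0 ω = x₀) (hx : ∀ k ω, x (k + 1) ω = T (x k ω) (fun i => ξ (k, i) ω)) (k : ℕ) :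
    Q.map (fun ω => (x k ω, fun i => ξ (k, i) ω)) = (Q.map (x k)).prod (Measure.pi fun _ => P) := by
  have hpast := measurable_iterate_past hT hx0 hx k
  have hblock := measurable_biSup_comap_pi (ξ := ξ) (A := {q : ℕ × ι | q.1 = k})
    (g := fun i => (k, i)) fun i => rfl
  have hdisj : Disjoint {q : ℕ × ι | q.1 < k} {q | q.1 = k} :=
    Set.disjoint_left.2 fun q (h₁ : q.1 < k) (h₂ : q.1 = k) => h₁.ne h₂
  have hlaw : Q.map (fun ω i => ξ (k, i) ω) = Measure.pi fun _ => P := by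
    rw [(iIndepFun_iff_map_fun_eq_pi_map fun i => (hξ (k, i)).aemeasurable).1
      (hind.precomp (Prod.mk_right_injective k))]
    simp only [hdist]
  rw [(indepFun_of_measurable_biSup hξ hind hdisj hpast hblock).map_prod_eq_prod_map_map
    (measurable_iterate hξ hT hx0 hx k).aemeasurable
    (measurable_pi_lambda _ fun i => hξ (k, i)).aemeasurable, hlaw]

theorem lintegral_comp_iterate_succ [SigmaFinite P] (hξ : ∀ q, Measurable (ξ q))
    (hind : iIndepFun ξ Q) (hdist : ∀ q, Q.map (ξ q) = P) (hT : Measurable (Function.uncurry T))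
    (hx0 : ∀ ω, x 0 ω = x₀) (hx : ∀ k ω, x (k + 1) ω = T (x k ω) (fun i => ξ (k, i) ω))
    {F : E → ENNReal} (hF : Measurable F) (k : ℕ) :
    ∫⁻ ω, F (x (k + 1) ω) ∂Q = ∫⁻ y, ∫⁻ v, F (T y v) ∂(Measure.pi fun _ => P) ∂(Q.map (x k)) := by
  have hxk := measurable_iterate hξ hT hx0 hx k
  simp_rw [hx]
  calc ∫⁻ ω, F (T (x k ω) fun i => ξ (k, i) ω) ∂Q
      = ∫⁻ z, F (T z.1 z.2) ∂(Q.map fun ω => (x k ω, fun i => ξ (k, i) ω)) :=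
        (lintegral_map (hF.comp hT) (hxk.prodMk (measurable_pi_lambda _ fun i => hξ (k, i)))).symm
    _ = ∫⁻ z, F (T z.1 z.2) ∂((Q.map (x k)).prod (Measure.pi fun _ => P)) := by
        rw [map_iterate_block_eq_prod hξ hind hdist hT hx0 hx k]
    _ = _ := lintegral_prod _ (hF.comp hT).aemeasurable

end Iteration

theorem sum_le_add_mul_of_add_le {a b : ℕ → ENNReal} {R : ENNReal}
    (h : ∀ k, a (k + 1) + b k ≤ a k + R) (K : ℕ) : ∑ k ∈ range K, b k ≤ a 0 + K * R := by
  suffices a K + ∑ k ∈ range K, b k ≤ a 0 + K * R from le_add_self.trans this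
  induction K with
  | zero => simp
  | succ K ih =>
    calc a (K + 1) + ∑ k ∈ range (K + 1), b k = (a (K + 1) + b K) + ∑ k ∈ range K, b k := by
          rw [sum_range_succ]; ring
      _ ≤ a K + R + ∑ k ∈ range K, b k := add_le_add_left (h K) _
      _ = (a K + ∑ k ∈ range K, b k) + R := by ring
      _ ≤ a 0 + K * R + R := by gcongr
      _ = a 0 + (K + 1 : ℕ) * R := by push_cast; ring

section SGD

variable {E Ω Ω' : Type*} [NormedAddCommGroup E] [InnerProductSpace ℝ E] [CompleteSpace E]
  [MeasurableSpace E] [BorelSpace E] [SecondCountableTopology E]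
  [MeasurableSpace Ω] {P : Measure Ω} [IsProbabilityMeasure P]
  [MeasurableSpace Ω'] {Q : Measure Ω'} [IsProbabilityMeasure Q]
  {f : E → ℝ} {L fstar σ2 γ : ℝ} {G : E → Ω → E} {S : ℕ} {ξ : ℕ × Fin S → Ω' → Ω}
  {x : ℕ → Ω' → E} {x₀ : E}

theorem lintegral_sgd_succ_add_le (hf : Differentiable ℝ f) (hL₀ : 0 ≤ L)
    (hL : ∀ x y, ‖gradient f x - gradient f y‖ ≤ L * ‖x - y‖) (hlb : ∀ x, fstar ≤ f x)
    (hGmeas : Measurable fun q : E × Ω => G q.1 q.2) (hG : ∀ x, MemLp (G x) 2 P)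
    (hGunbiased : ∀ x, ∫ ω, G x ω ∂P = gradient f x)
    (hGvar : ∀ x, ∫ ω, ‖G x ω - gradient f x‖ ^ 2 ∂P ≤ σ2)
    (hξ : ∀ q, Measurable (ξ q)) (hind : iIndepFun ξ Q) (hdist : ∀ q, Q.map (ξ q) = P)
    (hγ : 0 ≤ γ) (hLγ : L * γ ≤ 1) (hS : 0 < S) (hx0 : ∀ ω, x 0 ω = x₀)
    (hx : ∀ k ω, x (k + 1) ω = minibatchStep G γ (x k ω) fun i => ξ (k, i) ω) (k : ℕ) :
    ∫⁻ ω, ENNReal.ofReal (f (x (k + 1) ω) - fstar) ∂Q +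
        ∫⁻ ω, ENNReal.ofReal (γ / 2 * ‖gradient f (x k ω)‖ ^ 2) ∂Q ≤
      ∫⁻ ω, ENNReal.ofReal (f (x k ω) - fstar) ∂Q +
        ENNReal.ofReal (L * γ ^ 2 * σ2 / (2 * S)) := by
  have hT := measurable_minibatchStep hGmeas γ S
  have hxk := measurable_iterate hξ hT hx0 hx k
  have hgap : Measurable fun y => ENNReal.ofReal (f y - fstar) :=
    (hf.continuous.measurable.sub_const _).ennreal_ofReal
  have hnorm : Measurable fun y => ENNReal.ofReal (γ / 2 * ‖gradient f y‖ ^ 2) :=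
    (((continuous_gradient_of_lipschitz_gradient hL).norm.pow 2).const_mul _).measurable
      |>.ennreal_ofReal
  have : IsProbabilityMeasure (Q.map (x k)) := Measure.isProbabilityMeasure_map hxk.aemeasurable
  rw [lintegral_comp_iterate_succ hξ hind hdist hT hx0 hx hgap k, ← lintegral_map hnorm hxk,
    ← lintegral_map hgap hxk, ← lintegral_add_right _ hnorm]
  calc _ ≤ ∫⁻ y, (ENNReal.ofReal (f y - fstar) + ENNReal.ofReal (L * γ ^ 2 * σ2 / (2 * S)))
        ∂(Q.map (x k)) :=
        lintegral_mono fun y => lintegral_minibatchStep_add_le hf hL₀ hL hlb (hG y)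
          (hGunbiased y) (hGvar y) hγ hLγ hS
    _ = _ := by rw [lintegral_add_right _ measurable_const, lintegral_const, measure_univ, mul_one]

theorem sum_integral_norm_sq_gradient_le (hf : Differentiable ℝ f) (hL₀ : 0 ≤ L)
    (hL : ∀ x y, ‖gradient f x - gradient f y‖ ≤ L * ‖x - y‖) (hlb : ∀ x, fstar ≤ f x)
    (hGmeas : Measurable fun q : E × Ω => G q.1 q.2) (hG : ∀ x, MemLp (G x) 2 P)
    (hGunbiased : ∀ x, ∫ ω, G x ω ∂P = gradient f x)
    (hGvar : ∀ x, ∫ ω, ‖G x ω - gradient f x‖ ^ 2 ∂P ≤ σ2)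
    (hξ : ∀ q, Measurable (ξ q)) (hind : iIndepFun ξ Q) (hdist : ∀ q, Q.map (ξ q) = P)
    (hγ : 0 ≤ γ) (hLγ : L * γ ≤ 1) (hS : 0 < S) (hx0 : ∀ ω, x 0 ω = x₀)
    (hx : ∀ k ω, x (k + 1) ω = minibatchStep G γ (x k ω) fun i => ξ (k, i) ω) (K : ℕ) :
    γ / 2 * ∑ k ∈ range K, ∫ ω, ‖gradient f (x k ω)‖ ^ 2 ∂Q ≤
      f x₀ - fstar + K * (L * γ ^ 2 * σ2 / (2 * S)) := by
  have hσ2 : 0 ≤ σ2 := (integral_nonneg fun _ => sq_nonneg _).trans (hGvar x₀)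
  have hbound : 0 ≤ f x₀ - fstar + K * (L * γ ^ 2 * σ2 / (2 * S)) :=
    add_nonneg (sub_nonneg.2 (hlb x₀)) (by positivity)
  have hsq : ∀ k, Measurable fun ω => γ / 2 * ‖gradient f (x k ω)‖ ^ 2 := fun k =>
    (((continuous_gradient_of_lipschitz_gradient hL).norm.pow 2).const_mul _).measurable.comp
      (measurable_iterate hξ (measurable_minibatchStep hGmeas γ S) hx0 hx k)
  have htel := sum_le_add_mul_of_add_le (fun k => lintegral_sgd_succ_add_le hf hL₀ hL hlb hGmeas
    hG hGunbiased hGvar hξ hind hdist hγ hLγ hS hx0 hx k) K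
  rw [lintegral_congr fun ω => by rw [hx0], lintegral_const, measure_univ, mul_one,
    ← ENNReal.ofReal_natCast, ← ENNReal.ofReal_mul K.cast_nonneg,
    ← ENNReal.ofReal_add (sub_nonneg.2 (hlb x₀)) (by positivity)] at htel
  have hfin : ∀ k ∈ range K, ∫⁻ ω, ENNReal.ofReal (γ / 2 * ‖gradient f (x k ω)‖ ^ 2) ∂Q ≠ ⊤ :=
    fun k hk => ne_top_of_le_ne_top ENNReal.ofReal_ne_top
      ((single_le_sum (fun _ _ => bot_le) hk).trans htel)
  calc γ / 2 * ∑ k ∈ range K, ∫ ω, ‖gradient f (x k ω)‖ ^ 2 ∂Q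
      = ∑ k ∈ range K, (∫⁻ ω, ENNReal.ofReal (γ / 2 * ‖gradient f (x k ω)‖ ^ 2) ∂Q).toReal := by
        rw [mul_sum]
        refine sum_congr rfl fun k _ => ?_
        rw [← integral_const_mul, integral_eq_lintegral_of_nonneg_ae
          (ae_of_all _ fun _ => by positivity) (hsq k).aestronglyMeasurable]
    _ = (∑ k ∈ range K, ∫⁻ ω, ENNReal.ofReal (γ / 2 * ‖gradient f (x k ω)‖ ^ 2) ∂Q).toReal :=
        (ENNReal.toReal_sum hfin).symm
    _ ≤ _ := ENNReal.toReal_le_of_le_ofReal hbound htel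

end SGD

theorem le_mul_max_ceil_div_one {σ2 ε : ℝ} (hε : 0 < ε) :
    σ2 ≤ ε * (max ⌈σ2 / ε⌉₊ 1 : ℕ) := by
  rw [← div_le_iff₀' hε]
  exact (Nat.le_ceil _).trans (by exact_mod_cast le_max_left _ _)

theorem stepsize_bounds {L σ2 ε γ : ℝ} {S : ℕ} (hL : 0 < L) (hσ2 : 0 < σ2)
    (hσ2S : σ2 ≤ ε * S) (hγ : γ = min (1 / L) (ε * S / (2 * L * σ2))) :
    L * γ ≤ 1 ∧ 1 ≤ 2 * L * γ ∧ 2 * L * γ * σ2 ≤ ε * S := by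
  have hε : 0 ≤ ε * S := hσ2.le.trans hσ2S
  refine ⟨?_, ?_, ?_⟩
  · rw [← le_div_iff₀' hL, hγ]
    exact min_le_left _ _
  · rw [mul_comm, ← div_le_iff₀ (by positivity), hγ, le_min_iff,
      div_le_div_iff₀ (by positivity) hL, div_le_div_iff₀ (by positivity) (by positivity)]
    constructor <;> nlinarith
  · have h := min_le_right (1 / L) (ε * S / (2 * L * σ2))
    rw [← hγ, le_div_iff₀ (by positivity)] at h
    linarith

theorem stmt9 {d : ℕ} (f : EuclideanSpace ℝ (Fin d) → ℝ)
    (L : ℝ) (hL : 0 < L)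
    (hdiff : Differentiable ℝ f)
    (hsmooth : ∀ x y, ‖gradient f x - gradient f y‖ ≤ L * ‖x - y‖)
    (fstar : ℝ) (hlb : ∀ x, fstar ≤ f x)
    (x₀ : EuclideanSpace ℝ (Fin d)) (Δ : ℝ) (hΔ : Δ = f x₀ - fstar)
    (σ2 ε : ℝ) (hσ2 : 0 < σ2) (hε : 0 < ε)
    {Ω : Type*} [MeasurableSpace Ω] (P : Measure Ω) [IsProbabilityMeasure P]
    (G : EuclideanSpace ℝ (Fin d) → Ω → EuclideanSpace ℝ (Fin d))
    (hGmeas : Measurable (fun q : EuclideanSpace ℝ (Fin d) × Ω => G q.1 q.2))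
    (hGint : ∀ x, Integrable (G x) P)
    (hGsqint : ∀ x, Integrable (fun ω => ‖G x ω - gradient f x‖^2) P)
    (hGunbiased : ∀ x, ∫ ω, G x ω ∂P = gradient f x)
    (hGvar : ∀ x, ∫ ω, ‖G x ω - gradient f x‖^2 ∂P ≤ σ2)
    (S : ℕ) (hS : S = max ⌈σ2 / ε⌉₊ 1)
    {Ω' : Type*} [MeasurableSpace Ω'] (Q : Measure Ω') [IsProbabilityMeasure Q]
    (ξ : ℕ × Fin S → Ω' → Ω) (hξmeas : ∀ p, Measurable (ξ p))
    (hindep : iIndepFun ξ Q)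
    (hdist : ∀ p, Measure.map (ξ p) Q = P)
    (γ : ℝ) (hγ : γ = min (1 / L) (ε * S / (2 * L * σ2)))
    (x : ℕ → Ω' → EuclideanSpace ℝ (Fin d))
    (hx0 : ∀ ω, x 0 ω = x₀)
    (hxrec : ∀ k ω, x (k + 1) ω =
      x k ω - (γ * (1 / (S : ℝ))) • ∑ i : Fin S, G (x k ω) (ξ (k, i) ω)) :
    ∀ K : ℕ, 24 * Δ * L / ε ≤ K →
      (1 / (K : ℝ)) * ∑ k ∈ Finset.range K, ∫ ω, ‖gradient f (x k ω)‖^2 ∂Q ≤ ε := by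
  intro K hK
  have hS0 : 0 < S := hS ▸ lt_max_of_lt_right one_pos
  obtain ⟨hLγ, hγ₀, hγσ⟩ := stepsize_bounds hL hσ2 (hS ▸ le_mul_max_ceil_div_one hε) hγ
  have hγpos : 0 < γ := by nlinarith
  have hsum := sum_integral_norm_sq_gradient_le hdiff hL.le hsmooth hlb hGmeas
    (fun y => memLp_two_of_integrable_norm_sub_sq (hGint y).aestronglyMeasurable _ (hGsqint y))
    hGunbiased hGvar hξmeas hindep hdist hγpos.le hLγ hS0 hx0 hxrec K
  rw [← hΔ] at hsum
  rcases K.eq_zero_or_pos with rfl | hK0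
  · simp [hε.le]
  have hΔ0 : 0 ≤ Δ := hΔ ▸ sub_nonneg.2 (hlb x₀)
  have hnoise : L * γ ^ 2 * σ2 / (2 * S) ≤ γ * (ε / 4) := by
    rw [div_le_iff₀ (by positivity)]
    nlinarith
  rw [div_le_iff₀ hε] at hK
  rw [one_div_mul_eq_div, div_le_iff₀ (by positivity)]
  refine le_of_mul_le_mul_left ?_ hγpos
  -- `γ ∑ ≤ 2Δ + γKε/2 ≤ γ (4LΔ + Kε/2) ≤ γ K ε`, by `1 ≤ 2Lγ` and `24ΔL ≤ εK`
  nlinarith
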